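/- Let G be a finite group. Then ∑_{χ ∈ Irr(G)} χ(1) ≤ |G| / √|C|, where C is any conjugacy class of G containing a rational non-vanishing element. -/

import Mathlib

/-
If `x` is rational and non-vanishing, each `χ x` is a nonzero rational algebraic integer, hence a
nonzero integer, so `1 ≤ ‖χ x‖`. By Cauchy–Schwarz,
`∑ χ(1) ≤ ∑ χ(1) ‖χ x‖ ≤ (∑ χ(1)²)^{1/2} (∑ ‖χ x‖²)^{1/2}`, and Bessel's inequality for the
orthonormal irreducible characters, tested against the indicator of the class of `g`, gives
`∑ ‖χ g‖² ≤ |G| / |g^G|`; take `g = 1` and `g = x`.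

`χ x` is rational because `χ (x^k) = ∑ m_μ μ^k` over the eigenvalues `μ` of `x`: summing over the
`k` coprime to the order `n` of `x`, for which `x^k` is conjugate to `x`, writes `φ(n) χ x` as a
combination of Ramanujan sums `∑_{(k, n) = 1} μ^k`, which are integers by Möbius inversion.
-/
open Finset
open scoped Classical

/-- A function `χ : G → ℂ` is an irreducible character of `G` if it is the character of a
simple (irreducible) finite-dimensional complex representation of `G`. -/
def IsIrrChar (G : Type) [Group G] (χ : G → ℂ) : Prop :=
  ∃ V : FDRep ℂ G, CategoryTheory.Simple V ∧ χ = V.character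

/-- An element `x` is rational if it is conjugate to `x ^ i` for every integer `i`
coprime to the order of `x`. -/
def IsRational {G : Type} [Group G] (x : G) : Prop :=
  ∀ i : ℤ, IsCoprime i (orderOf x : ℤ) → IsConj x (x ^ i)

/-- Real adjacency matrix of the Cayley graph `Cay(G, S)`: `u` and `v` are adjacent iff
`v = a * u` for some `a ∈ S`. -/
def cayAdjR (G : Type) [Group G] [DecidableEq G] (S : Finset G) : Matrix G G ℝ :=
  Matrix.of fun u v => if v * u⁻¹ ∈ S then 1 else 0

/-- Complex adjacency matrix of the Cayley graph `Cay(G, S)`. -/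
def cayAdjC (G : Type) [Group G] [DecidableEq G] (S : Finset G) : Matrix G G ℂ :=
  Matrix.of fun u v => if v * u⁻¹ ∈ S then 1 else 0

theorem geom_sum_eq_ite_of_pow_eq_one {R : Type*} [CommRing R] [IsDomain R] {z : R} {n : ℕ}
    (hz : z ^ n = 1) : ∑ i ∈ range n, z ^ i = if z = 1 then (n : R) else 0 := by
  split_ifs with h
  · simp [h]
  · have := geom_sum_mul z n
    rw [hz, sub_self] at this
    exact (mul_eq_zero.mp this).resolve_right (sub_ne_zero.mpr h)

theorem Finset.sum_range_filter_dvd {M : Type*} [AddCommMonoid M] {e n : ℕ} (he : e ∣ n)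
    (f : ℕ → M) : ∑ i ∈ range n with e ∣ i, f i = ∑ j ∈ range (n / e), f (e * j) := by
  rcases eq_or_ne e 0 with rfl | he0
  · simp [Nat.eq_zero_of_zero_dvd he]
  symm
  refine sum_nbij' (e * ·) (· / e) ?_ ?_ ?_ ?_ fun _ _ => rfl
  · intro j hj
    simp only [mem_range, mem_filter] at hj ⊢
    exact ⟨(Nat.lt_div_iff_mul_lt' he _).mp hj, dvd_mul_right e j⟩
  · intro i hi
    simp only [mem_range, mem_filter] at hi ⊢
    exact Nat.div_lt_div_of_lt_of_dvd he hi.1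
  · exact fun j _ => Nat.mul_div_cancel_left j (Nat.pos_of_ne_zero he0)
  · exact fun i hi => Nat.mul_div_cancel' (mem_filter.mp hi).2

open ArithmeticFunction in
theorem Nat.ite_coprime_eq_sum_moebius {R : Type*} [Ring R] {n : ℕ} (hn : n ≠ 0) (i : ℕ) :
    (if n.Coprime i then 1 else 0 : R) = ∑ e ∈ n.divisors with e ∣ i, (moebius e : R) := by
  have hdiv : {e ∈ n.divisors | e ∣ i} = (n.gcd i).divisors := by
    rw [← Nat.divisors_filter_dvd_of_dvd hn (Nat.gcd_dvd_left n i)]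
    refine filter_congr fun e he => ?_
    rw [Nat.dvd_gcd_iff, and_iff_right (Nat.dvd_of_mem_divisors he)]
  have := congrArg (· (n.gcd i)) (coe_moebius_mul_coe_zeta (R := R))
  simp only [coe_mul_zeta_apply, one_apply, intCoe_apply] at this
  rw [hdiv, this]

open ArithmeticFunction in
theorem exists_sum_range_coprime_pow_eq_intCast {R : Type*} [CommRing R] [IsDomain R] {z : R}
    {n : ℕ} (hz : z ^ n = 1) : ∃ m : ℤ, ∑ i ∈ range n with n.Coprime i, z ^ i = m := by
  rcases eq_or_ne n 0 with rfl | hn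
  · exact ⟨0, by simp⟩
  refine ⟨∑ e ∈ n.divisors, moebius e * if z ^ e = 1 then ((n / e : ℕ) : ℤ) else 0, ?_⟩
  calc ∑ i ∈ range n with n.Coprime i, z ^ i
      = ∑ i ∈ range n, ∑ e ∈ n.divisors with e ∣ i, (moebius e : R) * z ^ i := by
        rw [sum_filter]
        refine sum_congr rfl fun i _ => ?_
        rw [← sum_mul, ← Nat.ite_coprime_eq_sum_moebius hn, ite_mul, one_mul, zero_mul]
    _ = ∑ e ∈ n.divisors, (moebius e : R) * ∑ j ∈ range (n / e), (z ^ e) ^ j := by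
        simp_rw [sum_filter]
        rw [sum_comm]
        refine sum_congr rfl fun e he => ?_
        rw [← sum_filter, sum_range_filter_dvd (Nat.dvd_of_mem_divisors he), mul_sum]
        simp_rw [pow_mul]
    _ = _ := by
        rw [Int.cast_sum]
        refine sum_congr rfl fun e he => ?_
        have hze : (z ^ e) ^ (n / e) = 1 := by
          rw [← pow_mul, Nat.mul_div_cancel' (Nat.dvd_of_mem_divisors he), hz]
        rw [Int.cast_mul, geom_sum_eq_ite_of_pow_eq_one hze]
        split_ifs <;> simp only [Int.cast_natCast, Int.cast_zero]

theorem isIntegral_of_pow_eq_one {R : Type*} [CommRing R] {z : R} {n : ℕ} (hn : n ≠ 0)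
    (hz : z ^ n = 1) : IsIntegral ℤ z :=
  ⟨Polynomial.X ^ n - 1, Polynomial.monic_X_pow_sub_C 1 hn, by simp [hz]⟩

theorem exists_intCast_of_isIntegral_of_natCast_mul {K : Type*} [Field K] [CharZero K] {z : K}
    (hz : IsIntegral ℤ z) {d : ℕ} (hd : d ≠ 0) {M : ℤ} (h : d * z = M) : ∃ m : ℤ, z = m := by
  have hzq : z = algebraMap ℚ K (M / d) := by
    rw [map_div₀, map_intCast, map_natCast, ← h, mul_div_cancel_left₀ _ (Nat.cast_ne_zero.mpr hd)]
  rw [hzq, isIntegral_algebraMap_iff (algebraMap ℚ K).injective] at hz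
  obtain ⟨m, hm⟩ := IsIntegrallyClosed.isIntegral_iff.mp hz
  exact ⟨m, by rw [hzq, ← hm, eq_intCast, map_intCast]⟩

namespace Module.End

theorem pow_apply_of_mem_eigenspace {R M : Type*} [CommRing R] [AddCommGroup M] [Module R M]
    {f : End R M} {μ : R} {v : M} (hv : v ∈ f.eigenspace μ) (k : ℕ) : (f ^ k) v = μ ^ k • v := by
  induction k with
  | zero => simp
  | succ k ih =>
    rw [pow_succ', mul_apply, ih, map_smul, mem_eigenspace_iff.mp hv, smul_smul, pow_succ]

variable {K V : Type*} [Field K] [AddCommGroup V] [Module K V]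

theorem isSemisimple_of_pow_eq_one {f : End K V} {n : ℕ} (hn : (n : K) ≠ 0) (hf : f ^ n = 1) :
    f.IsSemisimple :=
  isSemisimple_of_squarefree_aeval_eq_zero
    (Polynomial.separable_X_pow_sub_C 1 hn one_ne_zero).squarefree (by simp [hf])

theorem HasEigenvalue.pow_eq_one_of_pow_eq_one {f : End K V} {μ : K} (hμ : f.HasEigenvalue μ)
    {n : ℕ} (hf : f ^ n = 1) : μ ^ n = 1 := by
  obtain ⟨v, hv⟩ := hμ.exists_hasEigenvector
  have := pow_apply_of_mem_eigenspace hv.1 n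
  rw [hf, one_apply] at this
  exact smul_left_injective K hv.2 (this.symm.trans (one_smul K v).symm)

/-- `f` is diagonalizable, and `f ^ k` acts on the eigenspace of `μ` as `μ ^ k`. -/
theorem exists_trace_pow_eq_sum_of_isSemisimple [IsAlgClosed K] [FiniteDimensional K V]
    {f : End K V} (hf : f.IsSemisimple) :
    ∃ s : Finset K, (∀ μ ∈ s, f.HasEigenvalue μ) ∧ ∀ k : ℕ,
      LinearMap.trace K V (f ^ k) = ∑ μ ∈ s, (Module.finrank K (f.eigenspace μ) : K) * μ ^ k := by
  have hint := DirectSum.isInternal_submodule_of_iSupIndep_of_iSup_eq_top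
    f.eigenspaces_iSupIndep hf.iSup_eigenspace_eq_top
  have hfin := WellFoundedGT.finite_ne_bot_of_iSupIndep f.eigenspaces_iSupIndep
  refine ⟨hfin.toFinset, fun μ hμ => hasEigenvalue_iff.mpr (by simpa using hμ), fun k => ?_⟩
  have hmaps : ∀ μ, Set.MapsTo (f ^ k) (f.eigenspace μ) (f.eigenspace μ) := fun μ v hv => by
    rw [SetLike.mem_coe, pow_apply_of_mem_eigenspace hv]
    exact Submodule.smul_mem _ _ hv
  rw [LinearMap.trace_eq_sum_trace_restrict' hint hfin hmaps]
  refine sum_congr rfl fun μ _ => ?_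
  have hscalar : (f ^ k).restrict (hmaps μ) = μ ^ k • LinearMap.id := by
    ext ⟨v, hv⟩
    exact pow_apply_of_mem_eigenspace hv k
  rw [hscalar, map_smul, LinearMap.trace_id, smul_eq_mul, mul_comm]

end Module.End

theorem IsRational.isConj_pow {G : Type} [Group G] {x : G} (hx : IsRational x) {i : ℕ}
    (hi : (orderOf x).Coprime i) : IsConj x (x ^ i) := by
  simpa using hx i (Nat.isCoprime_iff_coprime.mpr hi.symm)

namespace FDRep
variable {G : Type} [Group G]

theorem exists_character_pow_eq_sum [Finite G] (V : FDRep ℂ G) (g : G) :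
    ∃ (s : Finset ℂ) (m : ℂ → ℕ), (∀ μ ∈ s, μ ^ orderOf g = 1) ∧
      ∀ k : ℕ, V.character (g ^ k) = ∑ μ ∈ s, (m μ : ℂ) * μ ^ k := by
  have hg : V.ρ g ^ orderOf g = 1 := by rw [← map_pow, pow_orderOf_eq_one, map_one]
  obtain ⟨s, hs, htr⟩ := Module.End.exists_trace_pow_eq_sum_of_isSemisimple
    (Module.End.isSemisimple_of_pow_eq_one (Nat.cast_ne_zero.mpr (orderOf_pos g).ne') hg)
  refine ⟨s, fun μ => Module.finrank ℂ (Module.End.eigenspace (V.ρ g) μ),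
    fun μ hμ => (hs μ hμ).pow_eq_one_of_pow_eq_one hg, fun k => ?_⟩
  rw [character, map_pow, htr]

theorem character_inv [Finite G] (V : FDRep ℂ G) (g : G) :
    V.character g⁻¹ = starRingEnd ℂ (V.character g) := by
  obtain ⟨s, m, hs, hchar⟩ := V.exists_character_pow_eq_sum g
  have hn := orderOf_pos g
  have hinv : g⁻¹ = g ^ (orderOf g - 1) := inv_eq_of_mul_eq_one_right <| by
    rw [← pow_succ', Nat.sub_add_cancel hn, pow_orderOf_eq_one]
  have h1 : V.character g = ∑ μ ∈ s, (m μ : ℂ) * μ := by simpa using hchar 1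
  rw [hinv, hchar, h1, map_sum]
  refine sum_congr rfl fun μ hμ => ?_
  rw [map_mul, Complex.conj_natCast,
    ← Complex.inv_eq_conj (Complex.norm_eq_one_of_pow_eq_one (hs μ hμ) hn.ne')]
  congr 1
  exact (inv_eq_of_mul_eq_one_right (by rw [← pow_succ', Nat.sub_add_cancel hn, hs μ hμ])).symm

theorem exists_character_eq_intCast_of_isRational [Finite G] (V : FDRep ℂ G) {x : G}
    (hx : IsRational x) : ∃ m : ℤ, V.character x = m := by
  obtain ⟨s, m, hs, hchar⟩ := V.exists_character_pow_eq_sum x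
  have h1 : V.character x = ∑ μ ∈ s, (m μ : ℂ) * μ := by simpa using hchar 1
  have hint : IsIntegral ℤ (V.character x) := h1 ▸ IsIntegral.sum _ fun μ hμ =>
    (isIntegral_algebraMap (x := (m μ : ℤ))).mul
      (isIntegral_of_pow_eq_one (orderOf_pos x).ne' (hs μ hμ))
  choose! r hr using fun μ (hμ : μ ∈ s) => exists_sum_range_coprime_pow_eq_intCast (hs μ hμ)
  refine exists_intCast_of_isIntegral_of_natCast_mul hint
    (Nat.totient_pos.mpr (orderOf_pos x)).ne' (M := ∑ μ ∈ s, m μ * r μ) ?_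
  calc ((orderOf x).totient : ℂ) * V.character x
      = ∑ i ∈ range (orderOf x) with (orderOf x).Coprime i, V.character (x ^ i) := by
        rw [Nat.totient_eq_card_coprime, ← nsmul_eq_mul, ← sum_const]
        refine sum_congr rfl fun i hi => ?_
        obtain ⟨c, hc⟩ := isConj_iff.mp (hx.isConj_pow (mem_filter.mp hi).2)
        rw [← hc, char_conj]
    _ = ∑ μ ∈ s, (m μ : ℂ) * ∑ i ∈ range (orderOf x) with (orderOf x).Coprime i, μ ^ i := by
        simp_rw [hchar, mul_sum]
        exact sum_comm
    _ = _ := by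
        push_cast
        exact sum_congr rfl fun μ hμ => by rw [hr μ hμ]

open CategoryTheory in
theorem sum_character_mul_character_inv [Fintype G] (V W : FDRep ℂ G) [Simple V] [Simple W] :
    ∑ g, V.character g * W.character g⁻¹ = if Nonempty (V ≅ W) then (Nat.card G : ℂ) else 0 := by
  have hG : (Nat.card G : ℂ) ≠ 0 := Nat.cast_ne_zero.mpr Nat.card_pos.ne'
  have : Invertible (Nat.card G : ℂ) := invertibleOfNonzero hG
  rw [← mul_inv_cancel_left₀ hG (∑ g, _), V.char_orthonormal W]
  split_ifs <;> simp

end FDRep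

namespace IsIrrChar
variable {G : Type} [Group G] {χ : G → ℂ}

theorem apply_of_isConj (hχ : IsIrrChar G χ) {x g : G} (h : IsConj x g) : χ g = χ x := by
  obtain ⟨V, -, rfl⟩ := hχ
  obtain ⟨c, rfl⟩ := isConj_iff.mp h
  exact V.char_conj x c

theorem one_le_norm_apply_of_isRational [Finite G] (hχ : IsIrrChar G χ) {x : G}
    (hx : IsRational x) (h0 : χ x ≠ 0) : 1 ≤ ‖χ x‖ := by
  obtain ⟨V, -, rfl⟩ := hχ
  obtain ⟨m, hm⟩ := V.exists_character_eq_intCast_of_isRational hx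
  rw [hm, Complex.norm_intCast, ← Int.cast_abs]
  exact_mod_cast Int.one_le_abs (by rintro rfl; exact h0 (by simp [hm]))

theorem sum_mul_conj [Fintype G] {ψ : G → ℂ} (hχ : IsIrrChar G χ) (hψ : IsIrrChar G ψ) :
    ∑ g, ψ g * starRingEnd ℂ (χ g) = if χ = ψ then (Nat.card G : ℂ) else 0 := by
  obtain ⟨V, hV, rfl⟩ := hχ
  simp_rw [← V.character_inv]
  split_ifs with heq
  · rw [← heq, V.sum_character_mul_character_inv, if_pos ⟨CategoryTheory.Iso.refl V⟩]
  · obtain ⟨W, hW, rfl⟩ := hψ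
    rw [W.sum_character_mul_character_inv, if_neg fun ⟨e⟩ => heq (W.char_iso e).symm]

end IsIrrChar

noncomputable def normalizedCharVec {G : Type} [Fintype G] (χ : G → ℂ) : EuclideanSpace ℂ G :=
  WithLp.toLp 2 (((Real.sqrt (Nat.card G) : ℂ))⁻¹ • χ)

theorem orthonormal_normalizedCharVec {G : Type} [Group G] [Fintype G] {Irr : Finset (G → ℂ)}
    (hIrr : ∀ χ ∈ Irr, IsIrrChar G χ) :
    Orthonormal ℂ fun χ : Irr => normalizedCharVec (χ : G → ℂ) := by
  rw [orthonormal_iff_ite]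
  rintro ⟨χ, hχ⟩ ⟨ψ, hψ⟩
  rw [normalizedCharVec, normalizedCharVec, WithLp.toLp_smul, WithLp.toLp_smul, inner_smul_left,
    inner_smul_right, EuclideanSpace.inner_toLp_toLp]
  simp only [dotProduct, Pi.star_apply, Complex.star_def, (hIrr χ hχ).sum_mul_conj (hIrr ψ hψ),
    Subtype.mk.injEq]
  split_ifs
  · have hN : (0 : ℝ) < Nat.card G := Nat.cast_pos.mpr Nat.card_pos
    rw [map_inv₀, Complex.conj_ofReal, ← mul_assoc, ← mul_inv, ← Complex.ofReal_mul,
      Real.mul_self_sqrt hN.le, Complex.ofReal_natCast, inv_mul_cancel₀ (by exact_mod_cast hN.ne')]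
  · rw [mul_zero, mul_zero]

theorem card_mul_sum_norm_sq_le {G : Type} [Group G] [Fintype G] {Irr : Finset (G → ℂ)}
    (hIrr : ∀ χ ∈ Irr, IsIrrChar G χ) {x : G} {C : Finset G} (hC : ∀ g, g ∈ C ↔ IsConj x g) :
    (#C : ℝ) * ∑ χ ∈ Irr, ‖χ x‖ ^ 2 ≤ Nat.card G := by
  have hN : (0 : ℝ) < Nat.card G := Nat.cast_pos.mpr Nat.card_pos
  have hC0 : (0 : ℝ) < #C := Nat.cast_pos.mpr (card_pos.mpr ⟨x, (hC x).mpr (IsConj.refl x)⟩)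
  set f : EuclideanSpace ℂ G := WithLp.toLp 2 fun g => if g ∈ C then 1 else 0
  have hf : ‖f‖ ^ 2 = #C := by simp [f, EuclideanSpace.norm_sq_eq, apply_ite]
  have hinner : ∀ χ ∈ Irr,
      ‖inner ℂ (normalizedCharVec χ) f‖ ^ 2 = (#C : ℝ) ^ 2 / Nat.card G * ‖χ x‖ ^ 2 := by
    intro χ hχ
    have hdot : f.ofLp ⬝ᵥ star χ = #C * starRingEnd ℂ (χ x) := by
      simp only [dotProduct, f, ite_mul, one_mul, zero_mul, sum_ite_mem, univ_inter, Pi.star_apply]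
      rw [sum_congr rfl fun g hg => by rw [(hIrr χ hχ).apply_of_isConj ((hC g).mp hg)], sum_const,
        nsmul_eq_mul, Complex.star_def]
    rw [normalizedCharVec, WithLp.toLp_smul, inner_smul_left, EuclideanSpace.inner_toLp_toLp, hdot,
      norm_mul, norm_mul, Complex.norm_conj, Complex.norm_conj, norm_inv, Complex.norm_real,
      Real.norm_of_nonneg (Real.sqrt_nonneg _), Complex.norm_natCast, mul_pow, mul_pow, inv_pow,
      Real.sq_sqrt hN.le]
    ring
  have hbessel := (orthonormal_normalizedCharVec hIrr).sum_inner_products_le (s := univ) f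
  rw [hf, sum_coe_sort Irr (fun χ => ‖inner ℂ (normalizedCharVec χ) f‖ ^ 2), sum_congr rfl hinner,
    ← mul_sum] at hbessel
  calc (#C : ℝ) * ∑ χ ∈ Irr, ‖χ x‖ ^ 2
      = Nat.card G / #C * ((#C : ℝ) ^ 2 / Nat.card G * ∑ χ ∈ Irr, ‖χ x‖ ^ 2) := by field_simp
    _ ≤ Nat.card G / #C * #C := by gcongr
    _ = Nat.card G := by field_simp

theorem sum_degrees_le_general {G : Type} [Group G] [Fintype G]
    (Irr : Finset (G → ℂ)) (hIrr : ∀ χ, χ ∈ Irr ↔ IsIrrChar G χ)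
    (x : G) (hrat : IsRational x) (hnv : ∀ χ ∈ Irr, χ x ≠ 0)
    (C : Finset G) (hC : ∀ g, g ∈ C ↔ IsConj x g) :
    ∑ χ ∈ Irr, (χ 1).re ≤ (Nat.card G : ℝ) / Real.sqrt C.card := by
  have hIrr' : ∀ χ ∈ Irr, IsIrrChar G χ := fun χ => (hIrr χ).mp
  have hC0 : (0 : ℝ) < #C := Nat.cast_pos.mpr (card_pos.mpr ⟨x, (hC x).mpr (IsConj.refl x)⟩)
  have hdeg : ∑ χ ∈ Irr, ‖χ 1‖ ^ 2 ≤ Nat.card G := by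
    simpa using card_mul_sum_norm_sq_le hIrr' (C := {1}) fun g => by simp [eq_comm]
  have hcls : ∑ χ ∈ Irr, ‖χ x‖ ^ 2 ≤ Nat.card G / #C := by
    rw [le_div_iff₀ hC0, mul_comm]
    exact card_mul_sum_norm_sq_le hIrr' hC
  calc ∑ χ ∈ Irr, (χ 1).re
      ≤ ∑ χ ∈ Irr, ‖χ 1‖ * ‖χ x‖ := sum_le_sum fun χ hχ => (Complex.re_le_norm _).trans
        (le_mul_of_one_le_right (norm_nonneg _)
          ((hIrr' χ hχ).one_le_norm_apply_of_isRational hrat (hnv χ hχ)))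
    _ ≤ √(∑ χ ∈ Irr, ‖χ 1‖ ^ 2) * √(∑ χ ∈ Irr, ‖χ x‖ ^ 2) := Real.sum_mul_le_sqrt_mul_sqrt _ _ _
    _ ≤ √(Nat.card G) * √(Nat.card G / #C) := by gcongr
    _ = Nat.card G / √(#C : ℝ) := by
        rw [Real.sqrt_div' _ hC0.le, ← mul_div_assoc, Real.mul_self_sqrt (Nat.cast_nonneg _)]

theorem sum_degrees_le {G : Type} [Group G] [Fintype G] [DecidableEq G]
    (Irr : Finset (G → ℂ)) (hIrr : ∀ χ, χ ∈ Irr ↔ IsIrrChar G χ)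
    (x : G) (hrat : IsRational x) (hnv : ∀ χ ∈ Irr, χ x ≠ 0)
    (C : Finset G) (hC : ∀ g, g ∈ C ↔ IsConj x g) :
    ∑ χ ∈ Irr, (χ 1).re ≤ (Nat.card G : ℝ) / Real.sqrt C.card :=
  sum_degrees_le_general Irr hIrr x hrat hnv C hC
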